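/- arXiv:2211.01628 — 5 statements merged into one kernel-verified Lean document; each statement's English description precedes it below -/
import Mathlib

section
/- If a randomized mechanism A guarantees (λ, ε)-Rényi differential privacy with λ > 1, then for any 0 < δ < 1, A guarantees (ε + log(1/δ)/(λ−1), δ)-differential privacy. -/
open scoped ENNReal

/-- Rényi divergence of order `l` between two discrete distributions,
`D_l(P‖Q) = (1/(l-1)) * log ∑ₓ P(x)^l * Q(x)^(1-l)`, with values in the
extended reals (it is `+∞` when `P` is not absolutely continuous w.r.t. `Q`). -/
noncomputable def renyiDiv {Ω : Type*} (l : ℝ) (P Q : PMF Ω) : EReal :=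
  ((l - 1)⁻¹ : ℝ) * ENNReal.log (∑' x, P x ^ l * Q x ^ (1 - l))

/-!
Split any event `S` along the set `B = {x | c · Q(x) < P(x)}` with `c = e^t`: off `B` the
probability `P` is at most `c · Q`, while on `B` the summand `P(x)^l Q(x)^(1-l)` of the Rényi
moment is at least `c^(l-1) P(x)`. Hence `P(B) · e^{(l-1)t} ≤ e^{(l-1)ε}` (a Markov-type bound),
and the choice `t = ε + log(1/δ)/(l-1)` makes `P(B) ≤ δ`.
-/

namespace ENNReal

theorem rpow_mul_rpow_one_sub_eq_mul_div_rpow (a b : ℝ≥0∞) {l : ℝ} (hl : 1 ≤ l) :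
    a ^ l * b ^ (1 - l) = a * (a / b) ^ (l - 1) := by
  have hl' : 0 ≤ l - 1 := sub_nonneg.mpr hl
  calc a ^ l * b ^ (1 - l) = a ^ (1 + (l - 1)) * (b ^ (l - 1))⁻¹ := by
        rw [add_sub_cancel, ← rpow_neg, neg_sub]
    _ = a * (a / b) ^ (l - 1) := by
        rw [rpow_add_of_nonneg _ _ zero_le_one hl', rpow_one, div_rpow_of_nonneg _ _ hl',
          div_eq_mul_inv, mul_assoc]

theorem mul_rpow_sub_one_le_rpow_mul_rpow_one_sub {a b c : ℝ≥0∞} {l : ℝ} (hl : 1 ≤ l)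
    (ha : a ≠ ⊤) (h : c * b < a) : a * c ^ (l - 1) ≤ a ^ l * b ^ (1 - l) := by
  rw [rpow_mul_rpow_one_sub_eq_mul_div_rpow a b hl]
  have hc : c ≤ a / b :=
    (ENNReal.le_div_iff_mul_le (Or.inr (pos_of_gt h).ne') (Or.inr ha)).mpr h.le
  gcongr

end ENNReal

namespace PMF

variable {Ω : Type*}

theorem toOuterMeasure_le_mul_add_toOuterMeasure_setOf_lt (P Q : PMF Ω) (c : ℝ≥0∞)
    (S : Set Ω) :
    P.toOuterMeasure S ≤ c * Q.toOuterMeasure S + P.toOuterMeasure {x | c * Q x < P x} := by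
  simp only [toOuterMeasure_apply, ← ENNReal.tsum_mul_left, ← ENNReal.tsum_add]
  refine ENNReal.tsum_le_tsum fun x => ?_
  by_cases hS : x ∈ S <;> by_cases hB : c * Q x < P x <;>
    simp [Set.indicator, hS, hB, not_lt.mp]

theorem toOuterMeasure_setOf_lt_mul_rpow_le (P Q : PMF Ω) {l : ℝ} (hl : 1 ≤ l) (c : ℝ≥0∞) :
    P.toOuterMeasure {x | c * Q x < P x} * c ^ (l - 1) ≤ ∑' x, P x ^ l * Q x ^ (1 - l) := by
  rw [toOuterMeasure_apply, ← ENNReal.tsum_mul_right]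
  refine ENNReal.tsum_le_tsum fun x => ?_
  by_cases hB : c * Q x < P x
  · simpa [Set.indicator, hB] using
      ENNReal.mul_rpow_sub_one_le_rpow_mul_rpow_one_sub hl (P.apply_ne_top x) hB
  · simp [Set.indicator, hB]

theorem tsum_rpow_mul_rpow_one_sub_le_of_renyiDiv_le {P Q : PMF Ω} {l ε : ℝ} (hl : 1 < l)
    (h : renyiDiv l P Q ≤ ε) :
    ∑' x, P x ^ l * Q x ^ (1 - l) ≤ ENNReal.ofReal (Real.exp ((l - 1) * ε)) := by
  have hl' : (0 : ℝ) < l - 1 := sub_pos.mpr hl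
  rw [← ENNReal.log_le_log_iff, ENNReal.log_ofReal_of_pos (Real.exp_pos _), Real.log_exp]
  calc ENNReal.log (∑' x, P x ^ l * Q x ^ (1 - l))
      = ((l - 1 : ℝ) : EReal) * renyiDiv l P Q := by
        rw [renyiDiv, ← mul_assoc, ← EReal.coe_mul, mul_inv_cancel₀ hl'.ne', EReal.coe_one,
          one_mul]
    _ ≤ ((l - 1 : ℝ) : EReal) * ε := mul_le_mul_of_nonneg_left h (by exact_mod_cast hl'.le)
    _ = ((l - 1) * ε : ℝ) := (EReal.coe_mul _ _).symm

theorem toOuterMeasure_setOf_lt_le_of_renyiDiv_le {P Q : PMF Ω} {l ε : ℝ} (hl : 1 < l)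
    (h : renyiDiv l P Q ≤ ε) (t : ℝ) :
    P.toOuterMeasure {x | ENNReal.ofReal (Real.exp t) * Q x < P x} ≤
      ENNReal.ofReal (Real.exp ((l - 1) * (ε - t))) := by
  have hmarkov :=
    (toOuterMeasure_setOf_lt_mul_rpow_le P Q hl.le (ENNReal.ofReal (Real.exp t))).trans
      (tsum_rpow_mul_rpow_one_sub_le_of_renyiDiv_le hl h)
  rw [ENNReal.ofReal_rpow_of_pos (Real.exp_pos t), ← Real.exp_mul,
    ← ENNReal.le_div_iff_mul_le (Or.inl (by positivity)) (Or.inl ENNReal.ofReal_ne_top),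
    ← ENNReal.ofReal_div_of_pos (Real.exp_pos _), ← Real.exp_sub] at hmarkov
  convert hmarkov using 3
  ring

end PMF

theorem rdp_to_dp_general {X Ω : Type*} (Neighbor : X → X → Prop) (A : X → PMF Ω)
    (l ε δ : ℝ) (hl : 1 < l) (hδ0 : 0 < δ)
    (hRDP : ∀ D D', Neighbor D D' → renyiDiv l (A D) (A D') ≤ (ε : EReal)) :
    ∀ D D', Neighbor D D' → ∀ S : Set Ω,
      (A D).toOuterMeasure S ≤
        ENNReal.ofReal (Real.exp (ε + Real.log (1 / δ) / (l - 1))) *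
          (A D').toOuterMeasure S + ENNReal.ofReal δ := by
  intro D D' hN S
  have hexp : Real.exp ((l - 1) * (ε - (ε + Real.log (1 / δ) / (l - 1)))) = δ := by
    rw [sub_add_cancel_left, mul_neg, mul_div_cancel₀ _ (sub_pos.mpr hl).ne', one_div,
      Real.log_inv, neg_neg, Real.exp_log hδ0]
  have htail := PMF.toOuterMeasure_setOf_lt_le_of_renyiDiv_le hl (hRDP D D' hN)
    (ε + Real.log (1 / δ) / (l - 1))
  rw [hexp] at htail
  calc (A D).toOuterMeasure S
      ≤ _ := PMF.toOuterMeasure_le_mul_add_toOuterMeasure_setOf_lt _ _ _ S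
    _ ≤ _ := by gcongr

/-- **From RDP to (ε, δ)-DP.** If a randomized mechanism `A` guarantees
`(l, ε)`-Rényi differential privacy with `l > 1` (w.r.t. a neighboring
relation `Neighbor` on datasets), then for any `0 < δ < 1`, `A` guarantees
`(ε + log (1/δ) / (l - 1), δ)`-differential privacy. -/
theorem rdp_to_dp {X Ω : Type*} (Neighbor : X → X → Prop) (A : X → PMF Ω)
    (l ε δ : ℝ) (hl : 1 < l) (hδ0 : 0 < δ) (hδ1 : δ < 1)
    (hRDP : ∀ D D', Neighbor D D' → renyiDiv l (A D) (A D') ≤ (ε : EReal)) :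
    ∀ D D', Neighbor D D' → ∀ S : Set Ω,
      (A D).toOuterMeasure S ≤
        ENNReal.ofReal (Real.exp (ε + Real.log (1 / δ) / (l - 1))) *
          (A D').toOuterMeasure S + ENNReal.ofReal δ :=
  rdp_to_dp_general Neighbor A l ε δ hl hδ0 hRDP
end

section
/- The Gaussian mechanism, which adds noise N(0, σ²) to a real-valued function f with ℓ2-sensitivity Δ (i.e., |f(D) − f(D')| ≤ Δ for all neighboring D, D'), satisfies (λ, λΔ²/(2σ²))-Rényi differential privacy for every λ > 1. -/
/-- Density of the Gaussian distribution `N(μ, σ²)` on `ℝ`. -/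
noncomputable def gaussDensity (μ σ : ℝ) (x : ℝ) : ℝ :=
  (1 / (σ * Real.sqrt (2 * Real.pi))) * Real.exp (-(x - μ) ^ 2 / (2 * σ ^ 2))

/-- Rényi divergence of order `l` between two densities `p, q` on `ℝ`:
`D_l(p‖q) = (1/(l-1)) * log ∫ p(x)^l * q(x)^(1-l) dx`. -/
noncomputable def renyiDivDensity (l : ℝ) (p q : ℝ → ℝ) : ℝ :=
  (l - 1)⁻¹ * Real.log (∫ x : ℝ, p x ^ l * q x ^ (1 - l))

open MeasureTheory Real

lemma integral_gaussDensity (μ σ : ℝ) (hσ : 0 < σ) :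
    ∫ x : ℝ, gaussDensity μ σ x = 1 := by
  unfold gaussDensity
  rw [MeasureTheory.integral_const_mul]
  have h1 : ∀ x : ℝ, Real.exp (-(x - μ) ^ 2 / (2 * σ ^ 2)) =
      Real.exp (-(1 / (2 * σ ^ 2)) * (x - μ) ^ 2) := by
    intro x; ring_nf
  simp_rw [h1]
  rw [integral_sub_right_eq_self (fun x => Real.exp (-(1 / (2 * σ ^ 2)) * x ^ 2)) μ]
  rw [integral_gaussian]
  have hπ : 0 < Real.pi := Real.pi_pos
  have : Real.pi / (1 / (2 * σ ^ 2)) = σ ^ 2 * (2 * Real.pi) := by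
    field_simp
  rw [this, Real.sqrt_mul (sq_nonneg σ) (2 * Real.pi), Real.sqrt_sq hσ.le]
  field_simp

lemma gauss_rpow_mul (μ₁ μ₂ σ l : ℝ) (hσ : 0 < σ) (x : ℝ) :
    gaussDensity μ₁ σ x ^ l * gaussDensity μ₂ σ x ^ (1 - l) =
      Real.exp (l * (l - 1) * (μ₁ - μ₂) ^ 2 / (2 * σ ^ 2)) *
        gaussDensity (l * μ₁ + (1 - l) * μ₂) σ x := by
  have hC : (0 : ℝ) < 1 / (σ * Real.sqrt (2 * Real.pi)) := by
    have := Real.pi_pos; positivity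
  unfold gaussDensity
  rw [Real.mul_rpow hC.le (Real.exp_pos _).le, Real.mul_rpow hC.le (Real.exp_pos _).le,
    ← Real.exp_mul, ← Real.exp_mul]
  have hCC : (1 / (σ * Real.sqrt (2 * Real.pi))) ^ l *
      (1 / (σ * Real.sqrt (2 * Real.pi))) ^ (1 - l) = 1 / (σ * Real.sqrt (2 * Real.pi)) := by
    rw [← Real.rpow_add hC]; norm_num
  have key : Real.exp (-(x - μ₁) ^ 2 / (2 * σ ^ 2) * l) *
      Real.exp (-(x - μ₂) ^ 2 / (2 * σ ^ 2) * (1 - l)) =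
      Real.exp (l * (l - 1) * (μ₁ - μ₂) ^ 2 / (2 * σ ^ 2)) *
        Real.exp (-(x - (l * μ₁ + (1 - l) * μ₂)) ^ 2 / (2 * σ ^ 2)) := by
    rw [← Real.exp_add, ← Real.exp_add]
    congr 1
    have h2 : (2 : ℝ) * σ ^ 2 ≠ 0 := by positivity
    field_simp
    ring
  calc (1 / (σ * Real.sqrt (2 * Real.pi))) ^ l * Real.exp (-(x - μ₁) ^ 2 / (2 * σ ^ 2) * l) *
        ((1 / (σ * Real.sqrt (2 * Real.pi))) ^ (1 - l) *
          Real.exp (-(x - μ₂) ^ 2 / (2 * σ ^ 2) * (1 - l)))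
      = ((1 / (σ * Real.sqrt (2 * Real.pi))) ^ l *
          (1 / (σ * Real.sqrt (2 * Real.pi))) ^ (1 - l)) *
        (Real.exp (-(x - μ₁) ^ 2 / (2 * σ ^ 2) * l) *
          Real.exp (-(x - μ₂) ^ 2 / (2 * σ ^ 2) * (1 - l))) := by ring
    _ = _ := by rw [hCC, key]; ring

/-- **RDP of the Gaussian mechanism.** If `f` has ℓ2-sensitivity `Δ`
(i.e. `|f D - f D'| ≤ Δ` for all neighboring datasets), then the Gaussian
mechanism `A(D) = f(D) + N(0, σ²)`, whose output distribution is
`N(f D, σ²)`, satisfies `(l, l * Δ² / (2σ²))`-Rényi differential privacy for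
every `l > 1`: the order-`l` Rényi divergence between the output
distributions on neighboring datasets is at most `l * Δ² / (2σ²)`. -/
theorem gaussian_mechanism_rdp {X : Type*} (Neighbor : X → X → Prop)
    (f : X → ℝ) (Δ σ l : ℝ) (hσ : 0 < σ) (hl : 1 < l)
    (hsens : ∀ D D', Neighbor D D' → |f D - f D'| ≤ Δ) :
    ∀ D D', Neighbor D D' →
      renyiDivDensity l (gaussDensity (f D) σ) (gaussDensity (f D') σ) ≤
        l * Δ ^ 2 / (2 * σ ^ 2) := by
  intro D D' hDD'
  set μ₁ := f D
  set μ₂ := f D'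
  have habs : |μ₁ - μ₂| ≤ Δ := hsens D D' hDD'
  unfold renyiDivDensity
  have hint : (∫ x : ℝ, gaussDensity μ₁ σ x ^ l * gaussDensity μ₂ σ x ^ (1 - l)) =
      Real.exp (l * (l - 1) * (μ₁ - μ₂) ^ 2 / (2 * σ ^ 2)) := by
    simp_rw [gauss_rpow_mul μ₁ μ₂ σ l hσ]
    rw [MeasureTheory.integral_const_mul, integral_gaussDensity _ _ hσ, mul_one]
  rw [hint, Real.log_exp]
  have hl1 : 0 < l - 1 := by linarith
  have hsq : (μ₁ - μ₂) ^ 2 ≤ Δ ^ 2 := by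
    calc (μ₁ - μ₂) ^ 2 = |μ₁ - μ₂| ^ 2 := (sq_abs _).symm
      _ ≤ Δ ^ 2 := by
          apply pow_le_pow_left₀ (abs_nonneg _) habs _
  have : (l - 1)⁻¹ * (l * (l - 1) * (μ₁ - μ₂) ^ 2 / (2 * σ ^ 2)) =
      l * (μ₁ - μ₂) ^ 2 / (2 * σ ^ 2) := by
    field_simp
  rw [this]
  apply div_le_div_of_nonneg_right ?_ (by positivity)
  · exact mul_le_mul_of_nonneg_left hsq (by linarith)
end

section
/- Adaptive sequential composition of RDP: if mechanism A₁ satisfies (λ, ε₁)-RDP and, for every output of A₁, mechanism A₂ satisfies (λ, ε₂)-RDP, then the composed mechanism D ↦ (A₁(D), A₂(D, A₁(D))) satisfies (λ, ε₁ + ε₂)-RDP. -/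
open scoped ENNReal

lemma renyiDiv_le_iff {Ω : Type*} {l ε : ℝ} (hl : 1 < l) (P Q : PMF Ω) :
    renyiDiv l P Q ≤ (ε : EReal) ↔
      ∑' x, P x ^ l * Q x ^ (1 - l) ≤ EReal.exp (((l - 1) * ε : ℝ) : EReal) := by
  have hc : (0:ℝ) < l - 1 := by linarith
  have hpos : (0:EReal) < ((l - 1 : ℝ) : EReal) := by exact_mod_cast hc
  rw [renyiDiv, EReal.coe_inv, ← EReal.div_eq_inv_mul,
    EReal.div_le_iff_le_mul hpos (EReal.coe_ne_top _), ← EReal.coe_mul]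
  nth_rewrite 1 [← EReal.log_exp (((l - 1) * ε : ℝ) : EReal)]
  exact ENNReal.log_le_log_iff

lemma bind_map_apply' {Ω₁ Ω₂ : Type*} (P : PMF Ω₁) (K : Ω₁ → PMF Ω₂) (a : Ω₁) (b : Ω₂) :
    (P.bind fun ω₁ => (K ω₁).map fun ω₂ => (ω₁, ω₂)) (a, b) = P a * K a b := by
  classical
  rw [PMF.bind_apply]
  have : (fun ω₁ => P ω₁ * ((K ω₁).map fun ω₂ => (ω₁, ω₂)) (a, b))
      = fun ω₁ => if ω₁ = a then P a * K a b else 0 := by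
    funext ω₁
    by_cases h : ω₁ = a
    · subst h
      rw [PMF.map_apply]
      rw [tsum_eq_single b]
      · simp
      · intro c hc
        simp [Prod.eq_iff_fst_eq_snd_eq, Ne.symm hc]
    · simp [PMF.map_apply, Prod.eq_iff_fst_eq_snd_eq, h, Ne.symm h]
  rw [this]
  exact tsum_ite_eq a _

/-- **Adaptive sequential composition of RDP.** If `A₁` satisfies
`(l, ε₁)`-RDP and, for every possible output `ω` of `A₁`, the mechanism
`A₂ · ω` satisfies `(l, ε₂)`-RDP, then the composed mechanism
`D ↦ (A₁ D, A₂ D (A₁ D))` satisfies `(l, ε₁ + ε₂)`-RDP. -/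
theorem rdp_adaptive_composition {X Ω₁ Ω₂ : Type*} (Neighbor : X → X → Prop)
    (A₁ : X → PMF Ω₁) (A₂ : X → Ω₁ → PMF Ω₂) (l ε₁ ε₂ : ℝ) (hl : 1 < l)
    (h₁ : ∀ D D', Neighbor D D' → renyiDiv l (A₁ D) (A₁ D') ≤ (ε₁ : EReal))
    (h₂ : ∀ ω : Ω₁, ∀ D D', Neighbor D D' →
      renyiDiv l (A₂ D ω) (A₂ D' ω) ≤ (ε₂ : EReal)) :
    ∀ D D', Neighbor D D' →
      renyiDiv l
        ((A₁ D).bind fun ω₁ => (A₂ D ω₁).map fun ω₂ => (ω₁, ω₂))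
        ((A₁ D').bind fun ω₁ => (A₂ D' ω₁).map fun ω₂ => (ω₁, ω₂)) ≤
        ((ε₁ + ε₂ : ℝ) : EReal) := by
  intro D D' hN
  rw [renyiDiv_le_iff hl]
  have hS1 := (renyiDiv_le_iff hl (A₁ D) (A₁ D')).mp (h₁ D D' hN)
  have hS2 : ∀ ω, ∑' y, (A₂ D ω) y ^ l * (A₂ D' ω) y ^ (1 - l)
      ≤ EReal.exp (((l - 1) * ε₂ : ℝ) : EReal) :=
    fun ω => (renyiDiv_le_iff hl _ _).mp (h₂ ω D D' hN)
  calc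
    ∑' x : Ω₁ × Ω₂,
        ((A₁ D).bind fun ω₁ => (A₂ D ω₁).map fun ω₂ => (ω₁, ω₂)) x ^ l *
        ((A₁ D').bind fun ω₁ => (A₂ D' ω₁).map fun ω₂ => (ω₁, ω₂)) x ^ (1 - l)
      = ∑' a, ∑' b, ((A₁ D) a * (A₂ D a) b) ^ l
          * ((A₁ D') a * (A₂ D' a) b) ^ (1 - l) := by
        rw [ENNReal.tsum_prod']
        congr 1; funext a; congr 1; funext b
        rw [bind_map_apply', bind_map_apply']
    _ = ∑' a, ((A₁ D) a ^ l * (A₁ D') a ^ (1 - l))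
          * ∑' b, (A₂ D a) b ^ l * (A₂ D' a) b ^ (1 - l) := by
        congr 1; funext a
        rw [← ENNReal.tsum_mul_left]
        congr 1; funext b
        rw [ENNReal.mul_rpow_of_ne_top (PMF.apply_ne_top _ _) (PMF.apply_ne_top _ _),
            ENNReal.mul_rpow_of_ne_top (PMF.apply_ne_top _ _) (PMF.apply_ne_top _ _)]
        ring
    _ ≤ ∑' a, ((A₁ D) a ^ l * (A₁ D') a ^ (1 - l))
          * EReal.exp (((l - 1) * ε₂ : ℝ) : EReal) :=
        ENNReal.tsum_le_tsum fun a => mul_le_mul_right (hS2 a) _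
    _ = (∑' a, (A₁ D) a ^ l * (A₁ D') a ^ (1 - l))
          * EReal.exp (((l - 1) * ε₂ : ℝ) : EReal) := ENNReal.tsum_mul_right
    _ ≤ EReal.exp (((l - 1) * ε₁ : ℝ) : EReal)
          * EReal.exp (((l - 1) * ε₂ : ℝ) : EReal) := mul_le_mul_left hS1 _
    _ = EReal.exp (((l - 1) * (ε₁ + ε₂) : ℝ) : EReal) := by
        rw [← EReal.exp_add, ← EReal.coe_add,
          show (l - 1) * ε₁ + (l - 1) * ε₂ = (l - 1) * (ε₁ + ε₂) by ring]
end

section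
/- Pure DP bound on Rényi divergence: if A satisfies (ε, 0)-differential privacy, then for every λ > 1 and neighboring D, D', D_λ(A(D)‖A(D')) ≤ min(ε, 2λε²) when ε ≤ 1; in particular the weaker bound D_λ(A(D)‖A(D')) ≤ ε always holds. -/
open scoped ENNReal

/-- **Pure DP bounds the Rényi divergence.** If `A` satisfies
`(ε, 0)`-differential privacy, i.e. `P[A(D)=x] ≤ exp ε * P[A(D')=x]`
pointwise for neighboring datasets, then for every order `l > 1` and all
neighboring `D, D'`, `D_l(A(D)‖A(D')) ≤ ε`. -/
theorem pure_dp_renyi_bound {X Ω : Type*} [Countable Ω]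
    (Neighbor : X → X → Prop) (A : X → PMF Ω) (ε : ℝ) (hε : 0 ≤ ε)
    (hDP : ∀ D D', Neighbor D D' → ∀ x : Ω,
      A D x ≤ ENNReal.ofReal (Real.exp ε) * A D' x) :
    ∀ l : ℝ, 1 < l → ∀ D D', Neighbor D D' →
      renyiDiv l (A D) (A D') ≤ (ε : EReal) := by
  intro l hl D D' hN
  set P := A D
  set Q := A D'
  set c : ℝ≥0∞ := ENNReal.ofReal (Real.exp (ε * (l - 1)))
  have hl1 : (0:ℝ) < l - 1 := by linarith
  -- pointwise bound
  have hpt : ∀ x : Ω, P x ^ l * Q x ^ (1 - l) ≤ c * P x := by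
    intro x
    by_cases hQ : Q x = 0
    · have hP : P x = 0 := by
        have : P x ≤ ENNReal.ofReal (Real.exp ε) * Q x := hDP D D' hN x
        simpa [hQ] using this
      have : (0:ℝ) < l := by linarith
      simp [hP, ENNReal.zero_rpow_of_pos this]
    · have hQtop : Q x ≠ ⊤ := PMF.apply_ne_top Q x
      have hQl : Q x ^ (l - 1) ≠ 0 := by
        simp [ENNReal.rpow_eq_zero_iff, hQ, hQtop]
      have hQltop : Q x ^ (l - 1) ≠ ⊤ := by
        simp [ENNReal.rpow_eq_top_iff, hQ, hQtop]
      have key : P x ^ (l - 1) ≤ ENNReal.ofReal (Real.exp ε) ^ (l - 1) * Q x ^ (l - 1) := by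
        rw [← ENNReal.mul_rpow_of_nonneg _ _ hl1.le]
        exact ENNReal.rpow_le_rpow (hDP D D' hN x) hl1.le
      have hc : ENNReal.ofReal (Real.exp ε) ^ (l - 1) = c := by
        rw [ENNReal.ofReal_rpow_of_pos (Real.exp_pos ε), ← Real.exp_mul]
      calc P x ^ l * Q x ^ (1 - l)
          = P x ^ (l - 1) * Q x ^ (1 - l) * P x := by
            rw [show l = (l - 1) + 1 by ring,
              ENNReal.rpow_add_of_nonneg _ _ hl1.le zero_le_one (x := P x), ENNReal.rpow_one]
            ring
        _ ≤ ENNReal.ofReal (Real.exp ε) ^ (l - 1) * Q x ^ (l - 1) * Q x ^ (1 - l) * P x := by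
            gcongr
        _ = c * (Q x ^ (l - 1) * Q x ^ (1 - l)) * P x := by rw [hc]; ring
        _ = c * P x := by
            rw [← ENNReal.rpow_add _ _ hQ hQtop]
            norm_num
  -- sum bound
  have hsum : (∑' x, P x ^ l * Q x ^ (1 - l)) ≤ c := by
    calc (∑' x, P x ^ l * Q x ^ (1 - l)) ≤ ∑' x, c * P x := ENNReal.tsum_le_tsum hpt
      _ = c * ∑' x, P x := ENNReal.tsum_mul_left
      _ = c := by rw [P.tsum_coe, mul_one]
  have hlog : ENNReal.log (∑' x, P x ^ l * Q x ^ (1 - l)) ≤ ((ε * (l - 1) : ℝ) : EReal) := by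
    calc ENNReal.log (∑' x, P x ^ l * Q x ^ (1 - l)) ≤ ENNReal.log c :=
          ENNReal.log_monotone hsum
      _ = ((ε * (l - 1) : ℝ) : EReal) := by
          rw [ENNReal.log_ofReal_of_pos (Real.exp_pos _), Real.log_exp]
  have hinv : (0:ℝ) ≤ (l - 1)⁻¹ := by positivity
  calc renyiDiv l P Q ≤ ((l - 1)⁻¹ : ℝ) * ((ε * (l - 1) : ℝ) : EReal) :=
        mul_le_mul_of_nonneg_left hlog (by exact_mod_cast hinv)
    _ = (ε : EReal) := by
        rw [← EReal.coe_mul]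
        congr 1
        field_simp
end

section
/- Optimizing the RDP-to-DP conversion over λ for the composed Gaussian mechanism: if a mechanism satisfies (λ, λρ)-RDP for all λ > 1 (with ρ > 0), then for any 0 < δ < 1 it satisfies (ε, δ)-DP with ε = ρ + 2√(ρ log(1/δ)), obtained by choosing λ = 1 + √(log(1/δ)/ρ). -/
/-!
Hölder's inequality with exponents `λ` and `λ / (λ - 1)`, applied to
`P x = (P x ^ λ * Q x ^ (1 - λ)) ^ (1 / λ) * Q x ^ (1 - 1 / λ)` on `S`, gives the
probability-preservation bound `P S ≤ (e^{ε} Q S) ^ (1 - 1 / λ)` for a `(λ, ε)`-RDP pair.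
The elementary inequality `x ^ (1 - 1 / λ) ≤ e^{log (1/δ) / (λ - 1)} x + δ` (split on whether
the left side exceeds `δ`) turns this into `(ε + log (1/δ) / (λ - 1), δ)`-DP. For `ε = λ ρ`
the choice `λ = 1 + √(log (1/δ) / ρ)` balances the two terms `(λ - 1) ρ` and
`log (1/δ) / (λ - 1)` at `√(ρ log (1/δ))` each.
-/

open scoped ENNReal

open MeasureTheory in
theorem ENNReal.inner_le_Lp_mul_Lq_tsum {ι : Type*} {p q : ℝ} (hpq : p.HolderConjugate q)
    (f g : ι → ℝ≥0∞) :
    ∑' i, f i * g i ≤ (∑' i, f i ^ p) ^ (1 / p) * (∑' i, g i ^ q) ^ (1 / q) := by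
  let : MeasurableSpace ι := ⊤
  have : MeasurableSingletonClass ι := ⟨fun _ => trivial⟩
  simpa [lintegral_count] using ENNReal.lintegral_mul_le_Lp_mul_Lq (Measure.count : Measure ι)
    hpq measurable_from_top.aemeasurable measurable_from_top.aemeasurable

theorem ENNReal.eq_rpow_inv_mul_rpow_one_sub_inv {a b : ℝ≥0∞} {l : ℝ} (hl : 0 < l)
    (hb : b ≠ ⊤) (hab : b = 0 → a = 0) :
    a = (a ^ l * b ^ (1 - l)) ^ l⁻¹ * b ^ (1 - l⁻¹) := by
  rcases eq_or_ne a 0 with rfl | ha0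
  · simp [ENNReal.zero_rpow_of_pos hl, hl]
  have hb0 : b ≠ 0 := fun h => ha0 (hab h)
  rw [ENNReal.mul_rpow_of_nonneg _ _ (inv_nonneg.mpr hl.le), ← ENNReal.rpow_mul,
    ← ENNReal.rpow_mul, mul_inv_cancel₀ hl.ne', ENNReal.rpow_one, mul_assoc,
    ← ENNReal.rpow_add _ _ hb0 hb, show (1 - l) * l⁻¹ + (1 - l⁻¹) = 0 by field_simp; ring,
    ENNReal.rpow_zero, mul_one]

namespace PMF

variable {Ω : Type*} {P Q : PMF Ω} {l : ℝ}

theorem apply_eq_zero_of_tsum_rpow_mul_rpow_ne_top (hl : 1 < l)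
    (hM : ∑' x, P x ^ l * Q x ^ (1 - l) ≠ ⊤) {x : Ω} (hQx : Q x = 0) : P x = 0 := by
  by_contra hPx
  refine hM (top_le_iff.mp ?_)
  calc (⊤ : ℝ≥0∞) = P x ^ l * Q x ^ (1 - l) := by
        rw [hQx, ENNReal.zero_rpow_of_neg (by linarith),
          ENNReal.mul_top (ENNReal.rpow_pos (pos_iff_ne_zero.mpr hPx) (P.apply_ne_top x)).ne']
    _ ≤ ∑' x, P x ^ l * Q x ^ (1 - l) := ENNReal.le_tsum x

theorem toOuterMeasure_le_tsum_rpow_mul_rpow (hl : 1 < l)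
    (hM : ∑' x, P x ^ l * Q x ^ (1 - l) ≠ ⊤) (S : Set Ω) :
    P.toOuterMeasure S ≤
      (∑' x, P x ^ l * Q x ^ (1 - l)) ^ l⁻¹ * Q.toOuterMeasure S ^ ((l - 1) / l) := by
  have hl0 : 0 < l := by linarith
  have hl1 : 0 < l - 1 := by linarith
  set f : Ω → ℝ≥0∞ := fun x => (P x ^ l * Q x ^ (1 - l)) ^ l⁻¹
  set g : Ω → ℝ≥0∞ := S.indicator fun x => Q x ^ (1 - l⁻¹)
  have hPfg : ∀ x, S.indicator P x = f x * g x := fun x => by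
    rw [← Set.indicator_mul_right]
    exact congrArg (S.indicator · x) (funext fun y =>
      ENNReal.eq_rpow_inv_mul_rpow_one_sub_inv hl0 (Q.apply_ne_top y)
        (apply_eq_zero_of_tsum_rpow_mul_rpow_ne_top hl hM))
  have hf : ∀ x, f x ^ l = P x ^ l * Q x ^ (1 - l) := fun x => by
    rw [← ENNReal.rpow_mul, inv_mul_cancel₀ hl0.ne', ENNReal.rpow_one]
  have hg : ∀ x, g x ^ (l / (l - 1)) = S.indicator Q x := fun x => by
    by_cases hx : x ∈ S
    · dsimp only [g]
      rw [Set.indicator_of_mem hx, Set.indicator_of_mem hx, ← ENNReal.rpow_mul,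
        show (1 - l⁻¹) * (l / (l - 1)) = 1 by field_simp, ENNReal.rpow_one]
    · dsimp only [g]
      rw [Set.indicator_of_notMem hx, Set.indicator_of_notMem hx,
        ENNReal.zero_rpow_of_pos (div_pos hl0 hl1)]
  calc P.toOuterMeasure S = ∑' x, f x * g x := by
        rw [toOuterMeasure_apply]; exact tsum_congr hPfg
    _ ≤ (∑' x, f x ^ l) ^ (1 / l) * (∑' x, g x ^ (l / (l - 1))) ^ (1 / (l / (l - 1))) :=
        ENNReal.inner_le_Lp_mul_Lq_tsum (Real.HolderConjugate.conjExponent hl) f g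
    _ = _ := by
        simp only [hf, hg, ← toOuterMeasure_apply, one_div, inv_div]

end PMF

theorem tsum_rpow_mul_rpow_le_of_renyiDiv_le {Ω : Type*} {P Q : PMF Ω} {l ε : ℝ} (hl : 1 < l)
    (h : renyiDiv l P Q ≤ ε) :
    ∑' x, P x ^ l * Q x ^ (1 - l) ≤ ENNReal.ofReal (Real.exp ((l - 1) * ε)) := by
  set M := ∑' x, P x ^ l * Q x ^ (1 - l)
  have hl1 : (0 : ℝ) < l - 1 := by linarith
  have hlog : ENNReal.log M ≤ (((l - 1) * ε : ℝ) : EReal) := by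
    rw [renyiDiv, mul_comm, EReal.coe_inv, ← div_eq_mul_inv,
      EReal.div_le_iff_le_mul (by exact_mod_cast hl1) (EReal.coe_ne_top _)] at h
    exact_mod_cast h
  calc M = EReal.exp (ENNReal.log M) := (ENNReal.exp_log M).symm
    _ ≤ EReal.exp ((l - 1) * ε : ℝ) := EReal.exp_monotone hlog
    _ = ENNReal.ofReal (Real.exp ((l - 1) * ε)) := EReal.exp_coe _

theorem Real.rpow_le_exp_mul_add {x l δ : ℝ} (hx : 0 ≤ x) (hl : 1 < l) (hδ : 0 < δ) :
    x ^ ((l - 1) / l) ≤ Real.exp (Real.log (1 / δ) / (l - 1)) * x + δ := by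
  have hl1 : 0 < l - 1 := by linarith
  by_cases hsmall : x ^ ((l - 1) / l) ≤ δ
  · nlinarith [Real.exp_pos (Real.log (1 / δ) / (l - 1))]
  push Not at hsmall
  have hx0 : 0 < x := hx.lt_of_ne (by
    rintro rfl; rw [Real.zero_rpow (div_pos hl1 (by linarith)).ne'] at hsmall
    linarith)
  have hlog : Real.log δ < (l - 1) / l * Real.log x := by
    rw [← Real.log_rpow hx0]; exact Real.log_lt_log hδ hsmall
  have hexp : (l - 1) / l * Real.log x ≤ Real.log (1 / δ) / (l - 1) + Real.log x := by
    have hrw : (l - 1) / l * Real.log x - Real.log x = -((l - 1) / l * Real.log x) / (l - 1) := by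
      field_simp; ring
    rw [one_div, Real.log_inv, ← sub_le_iff_le_add, hrw, neg_div, neg_div]
    exact neg_le_neg (div_le_div_of_nonneg_right hlog.le hl1.le)
  calc x ^ ((l - 1) / l) = Real.exp ((l - 1) / l * Real.log x) := by
        rw [Real.rpow_def_of_pos hx0, mul_comm]
    _ ≤ Real.exp (Real.log (1 / δ) / (l - 1) + Real.log x) := Real.exp_le_exp.mpr hexp
    _ ≤ Real.exp (Real.log (1 / δ) / (l - 1)) * x + δ := by
        rw [Real.exp_add, Real.exp_log hx0]; linarith

theorem PMF.toOuterMeasure_le_of_renyiDiv_le {Ω : Type*} {P Q : PMF Ω} {l ε δ : ℝ} (hl : 1 < l)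
    (hδ : 0 < δ) (h : renyiDiv l P Q ≤ ε) (S : Set Ω) :
    P.toOuterMeasure S ≤
      ENNReal.ofReal (Real.exp (ε + Real.log (1 / δ) / (l - 1))) * Q.toOuterMeasure S +
        ENNReal.ofReal δ := by
  have hl0 : 0 < l := by linarith
  have hθ : 0 ≤ (l - 1) / l := div_nonneg (by linarith) hl0.le
  have hM := tsum_rpow_mul_rpow_le_of_renyiDiv_le hl h
  set t := (Q.toOuterMeasure S).toReal
  have hQS : Q.toOuterMeasure S = ENNReal.ofReal t :=
    (ENNReal.ofReal_toReal (ne_top_of_le_ne_top ENNReal.one_ne_top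
      ((Q.toOuterMeasure.mono (Set.subset_univ S)).trans_eq
        ((Q.toOuterMeasure_apply_eq_one_iff _).mpr (Set.subset_univ _))))).symm
  have hmoment : ENNReal.ofReal (Real.exp ((l - 1) * ε)) ^ l⁻¹ =
      ENNReal.ofReal (Real.exp ε) ^ ((l - 1) / l) := by
    rw [ENNReal.ofReal_rpow_of_pos (Real.exp_pos _), ENNReal.ofReal_rpow_of_pos (Real.exp_pos _),
      ← Real.exp_mul, ← Real.exp_mul]
    congr 2; field_simp
  calc P.toOuterMeasure S
      ≤ (∑' x, P x ^ l * Q x ^ (1 - l)) ^ l⁻¹ * Q.toOuterMeasure S ^ ((l - 1) / l) :=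
        P.toOuterMeasure_le_tsum_rpow_mul_rpow hl (ne_top_of_le_ne_top ENNReal.ofReal_ne_top hM) S
    _ ≤ ENNReal.ofReal (Real.exp ε) ^ ((l - 1) / l) * Q.toOuterMeasure S ^ ((l - 1) / l) := by
        rw [← hmoment]; gcongr
    _ = ENNReal.ofReal ((Real.exp ε * t) ^ ((l - 1) / l)) := by
        rw [hQS, ← ENNReal.mul_rpow_of_nonneg _ _ hθ, ← ENNReal.ofReal_mul (Real.exp_pos _).le,
          ENNReal.ofReal_rpow_of_nonneg (by positivity) hθ]
    _ ≤ ENNReal.ofReal (Real.exp (Real.log (1 / δ) / (l - 1)) * (Real.exp ε * t) + δ) :=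
        ENNReal.ofReal_le_ofReal (Real.rpow_le_exp_mul_add (by positivity) hl hδ)
    _ = _ := by
        rw [ENNReal.ofReal_add (by positivity) hδ.le, ← mul_assoc, ← Real.exp_add, add_comm _ ε,
          ENNReal.ofReal_mul (Real.exp_pos _).le, hQS]

theorem one_add_sqrt_div_mul_add_div_eq {ρ L : ℝ} (hρ : 0 < ρ) (hL : 0 ≤ L) :
    (1 + Real.sqrt (L / ρ)) * ρ + L / ((1 + Real.sqrt (L / ρ)) - 1) =
      ρ + 2 * Real.sqrt (ρ * L) := by
  set s := Real.sqrt (L / ρ)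
  have hL_eq : L = s * s * ρ := by
    rw [Real.mul_self_sqrt (by positivity)]; field_simp
  have hsqrt : Real.sqrt (ρ * L) = s * ρ := by
    rw [hL_eq, show ρ * (s * s * ρ) = (s * ρ) * (s * ρ) by ring,
      Real.sqrt_mul_self (by positivity)]
  rw [hsqrt, add_sub_cancel_left, hL_eq, mul_assoc,
    mul_div_cancel_left_of_imp fun hs => by simp [hs]]
  ring

/-- **Optimized RDP-to-DP conversion.** If a mechanism satisfies
`(l, l * ρ)`-RDP for every order `l > 1` (with `ρ > 0`), then for any
`0 < δ < 1` it satisfies `(ε, δ)`-DP with `ε = ρ + 2 * √(ρ * log (1/δ))`,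
obtained by choosing `l = 1 + √(log (1/δ) / ρ)`: indeed at this choice of
`l` the converted privacy parameter `l * ρ + log (1/δ) / (l - 1)` equals
`ρ + 2 * √(ρ * log (1/δ))`. -/
theorem rdp_to_dp_optimized {X Ω : Type*} (Neighbor : X → X → Prop)
    (A : X → PMF Ω) (ρ δ : ℝ) (hρ : 0 < ρ) (hδ0 : 0 < δ) (hδ1 : δ < 1)
    (hRDP : ∀ l : ℝ, 1 < l → ∀ D D', Neighbor D D' →
      renyiDiv l (A D) (A D') ≤ ((l * ρ : ℝ) : EReal)) :
    (∀ D D', Neighbor D D' → ∀ S : Set Ω,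
        (A D).toOuterMeasure S ≤
          ENNReal.ofReal (Real.exp (ρ + 2 * Real.sqrt (ρ * Real.log (1 / δ)))) *
            (A D').toOuterMeasure S + ENNReal.ofReal δ) ∧
      (1 + Real.sqrt (Real.log (1 / δ) / ρ)) * ρ +
          Real.log (1 / δ) / ((1 + Real.sqrt (Real.log (1 / δ) / ρ)) - 1) =
        ρ + 2 * Real.sqrt (ρ * Real.log (1 / δ)) := by
  have hL : 0 < Real.log (1 / δ) := Real.log_pos ((one_lt_div hδ0).mpr hδ1)
  have hε := one_add_sqrt_div_mul_add_div_eq hρ hL.le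
  refine ⟨fun D D' hN S => ?_, hε⟩
  have hl : 1 < 1 + Real.sqrt (Real.log (1 / δ) / ρ) :=
    lt_add_of_pos_right 1 (Real.sqrt_pos.mpr (div_pos hL hρ))
  simpa only [hε] using PMF.toOuterMeasure_le_of_renyiDiv_le hl hδ0 (hRDP _ hl D D' hN) S
end
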